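/- For every admissible subset P ⊆ V, the function Δ_P : V → R is a K-class, i.e., for every edge (i,j) ∈ E the element 1 − e^{α(i,j)} divides Δ_P(i) − Δ_P(j) in R. -/

import Mathlib

noncomputable section

/-- Standard basis vector `e_k` of `ℤ^{n+1}` (1-indexed), with `e 0 = 0`. -/
def ee (n k : ℕ) : Fin (n+1) → ℤ := fun t => if (t : ℕ) + 1 = k then 1 else 0

/-- The function `h : V → ℤ^{n+1}`. -/
def hh (n j : ℕ) : Fin (n+1) → ℤ :=
  if j ≤ n+2 then ee n (j-1) - ee n (n+1) else ee n n - ee n (2*n+2-j)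

/-- The Laurent polynomial ring `R = ℤ[y₁^{±1},…,y_{n+1}^{±1}]`. -/
abbrev Rg (n : ℕ) : Type := AddMonoidAlgebra ℤ (Fin (n+1) → ℤ)

/-- The monomial `e^w`. -/
def ex (n : ℕ) (w : Fin (n+1) → ℤ) : Rg n := AddMonoidAlgebra.single w 1

/-- `ī = 2n+3-i`. -/
def bar (n i : ℕ) : ℕ := 2*n+3 - i

/-- Membership in the vertex set `V = {1,…,2n+2}`. -/
def memV (n i : ℕ) : Prop := 1 ≤ i ∧ i ≤ 2*n+2

/-- The axial function `α(i,j) = h(j) - h(i)`. -/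
def axl (n i j : ℕ) : Fin (n+1) → ℤ := hh n j - hh n i

/-- The K-class `M_v`. -/
def Mv (n v : ℕ) (l : ℕ) : Rg n :=
  if l = v then 1
  else if l = bar n v then ex n (ee n n - ee n (n+1) - (2:ℤ) • hh n (bar n v))
  else ex n (hh n v - hh n l)

/-- The pointwise inverse `M_v⁻¹`. -/
def MvInv (n v : ℕ) (l : ℕ) : Rg n :=
  if l = v then 1
  else if l = bar n v then ex n (-(ee n n - ee n (n+1) - (2:ℤ) • hh n (bar n v)))
  else ex n (hh n l - hh n v)

/-- A subset `P ⊆ V` is admissible if it is nonempty and contains no pair `{i, ī}`. -/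
def admissible (n : ℕ) (P : Finset ℕ) : Prop :=
  P.Nonempty ∧ (∀ i ∈ P, memV n i) ∧ (∀ i ∈ P, bar n i ∉ P)

/-- The vertex set as a finset. -/
def Vfin (n : ℕ) : Finset ℕ := Finset.Icc 1 (2*n+2)

/-- The Thom class `Δ_P`. -/
def Dl (n : ℕ) (P : Finset ℕ) (l : ℕ) : Rg n :=
  if l ∈ P then
    ∏ k ∈ (Vfin n).filter (fun k => k ∉ P ∧ k ≠ bar n l), (1 - ex n (axl n l k))
  else 0

/-- `φ : V → R` is a K-class if `1 - e^{α(i,j)}` divides `φ(i) - φ(j)` for every edge `(i,j)`. -/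
def isKClass (n : ℕ) (f : ℕ → Rg n) : Prop :=
  ∀ i j : ℕ, memV n i → memV n j → j ≠ i → j ≠ bar n i →
    (1 - ex n (axl n i j)) ∣ (f i - f j)

/-!
For `l ∈ P`, `Δ_P(l)` has the factor `1 - e^{α(l,k)}` for every `k ∉ P ∪ {l̄}`, which settles the
edges leaving `P` (up to the unit `-e^{α(j,i)}` relating `1 - e^{α(i,j)}` and `1 - e^{α(j,i)}`).
For an edge `(i,j)` inside `P`, admissibility puts `ī, j̄` outside `P`, so `Δ_P(i)` and `Δ_P(j)`
share the factor `1 - e^{α(i,j̄)} = 1 - e^{α(j,ī)}` (because `h(k) + h(k̄)` does not depend on `k`);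
the remaining products run over the same vertices, and their factors agree modulo
`1 - e^{α(i,j)}` since `α(i,k) = α(i,j) + α(j,k)`.
-/

theorem Finset.dvd_prod_sub_prod {ι R : Type*} [CommRing R] (s : Finset ι) {f g : ι → R} {d : R}
    (h : ∀ k ∈ s, d ∣ f k - g k) : d ∣ ∏ k ∈ s, f k - ∏ k ∈ s, g k := by
  simp only [← Ideal.mem_span_singleton, ← Ideal.Quotient.eq, map_prod] at h ⊢
  exact Finset.prod_congr rfl h

theorem one_sub_dvd_one_sub_of_mul_eq_one {R : Type*} [CommRing R] {x y : R} (h : x * y = 1) :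
    1 - x ∣ 1 - y :=
  ⟨-y, by linear_combination -h⟩

lemma ex_add (n : ℕ) (a b : Fin (n+1) → ℤ) : ex n (a + b) = ex n a * ex n b := by
  simp [ex, AddMonoidAlgebra.single_mul_single]

lemma ex_mul_ex_neg (n : ℕ) (a : Fin (n+1) → ℤ) : ex n a * ex n (-a) = 1 := by
  rw [← ex_add, add_neg_cancel]
  rfl

lemma mem_Vfin {n k : ℕ} : k ∈ Vfin n ↔ memV n k := Finset.mem_Icc

lemma bar_bar {n i : ℕ} (h : memV n i) : bar n (bar n i) = i := by
  unfold memV at h; unfold bar; omega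

lemma memV_bar {n i : ℕ} (h : memV n i) : memV n (bar n i) := by
  unfold memV at *; unfold bar; omega

lemma hh_add_hh_bar {n k : ℕ} (hk : memV n k) :
    hh n k + hh n (bar n k) = ee n n - ee n (n+1) := by
  obtain ⟨h1, h2⟩ := hk
  unfold hh bar
  split_ifs
  · obtain rfl | rfl : k = n+1 ∨ k = n+2 := by omega
    · rw [show n+1-1 = n by omega, show 2*n+3-(n+1)-1 = n+1 by omega]; abel
    · rw [show n+2-1 = n+1 by omega, show 2*n+3-(n+2)-1 = n by omega]; abel
  · rw [show 2*n+2-(2*n+3-k) = k-1 by omega]; abel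
  · rw [show 2*n+3-k-1 = 2*n+2-k by omega]; abel
  · omega

lemma axl_bar {n i j : ℕ} (hi : memV n i) (hj : memV n j) :
    axl n i (bar n j) = axl n j (bar n i) := by
  unfold axl
  linear_combination hh_add_hh_bar hj - hh_add_hh_bar hi

lemma axl_add (n i j k : ℕ) : axl n j k + axl n i j = axl n i k := by
  unfold axl; abel

lemma axl_swap (n i j : ℕ) : axl n j i = -axl n i j := by
  unfold axl; abel

lemma one_sub_ex_axl_dvd_sub (n i j k : ℕ) :
    1 - ex n (axl n i j) ∣ (1 - ex n (axl n i k)) - (1 - ex n (axl n j k)) :=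
  ⟨ex n (axl n j k), by rw [← axl_add n i j k, ex_add]; ring⟩

lemma one_sub_ex_axl_dvd_swap (n i j : ℕ) : 1 - ex n (axl n i j) ∣ 1 - ex n (axl n j i) := by
  rw [axl_swap n i j]
  exact one_sub_dvd_one_sub_of_mul_eq_one (ex_mul_ex_neg n _)

section Dl

variable {n : ℕ} {P : Finset ℕ}

lemma Dl_of_not_mem {l : ℕ} (hl : l ∉ P) : Dl n P l = 0 := if_neg hl

lemma Dl_eq_mul_prod_erase {l m : ℕ} (hl : l ∈ P) (hm : memV n m) (hmP : m ∉ P)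
    (hml : m ≠ bar n l) :
    Dl n P l = (1 - ex n (axl n l m)) *
      ∏ k ∈ ((Vfin n).filter (fun k => k ∉ P ∧ k ≠ bar n l)).erase m, (1 - ex n (axl n l k)) := by
  rw [Dl, if_pos hl, Finset.mul_prod_erase _ (fun k => 1 - ex n (axl n l k))]
  exact Finset.mem_filter.2 ⟨mem_Vfin.2 hm, hmP, hml⟩

lemma one_sub_ex_axl_dvd_Dl {l m : ℕ} (hl : l ∈ P) (hm : memV n m) (hmP : m ∉ P)
    (hml : m ≠ bar n l) : 1 - ex n (axl n l m) ∣ Dl n P l :=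
  ⟨_, Dl_eq_mul_prod_erase hl hm hmP hml⟩

lemma one_sub_ex_axl_dvd_Dl_sub_Dl (hPbar : ∀ i ∈ P, bar n i ∉ P) {i j : ℕ}
    (hi : memV n i) (hj : memV n j) (hiP : i ∈ P) (hjP : j ∈ P) (hji : j ≠ i) :
    1 - ex n (axl n i j) ∣ Dl n P i - Dl n P j := by
  have hbar : bar n j ≠ bar n i := fun h => hji (by rw [← bar_bar hj, h, bar_bar hi])
  have herase : ((Vfin n).filter (fun k => k ∉ P ∧ k ≠ bar n i)).erase (bar n j) =
      ((Vfin n).filter (fun k => k ∉ P ∧ k ≠ bar n j)).erase (bar n i) := by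
    ext k
    simp only [Finset.mem_erase, Finset.mem_filter]
    tauto
  rw [Dl_eq_mul_prod_erase hiP (memV_bar hj) (hPbar j hjP) hbar,
    Dl_eq_mul_prod_erase hjP (memV_bar hi) (hPbar i hiP) hbar.symm, axl_bar hi hj, herase,
    ← mul_sub]
  exact dvd_mul_of_dvd_right
    (Finset.dvd_prod_sub_prod _ fun k _ => one_sub_ex_axl_dvd_sub n i j k) _

end Dl

theorem Dl_isKClass_general (n : ℕ) (P : Finset ℕ) (hP : admissible n P) :
    isKClass n (Dl n P) := by
  obtain ⟨-, -, hPbar⟩ := hP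
  intro i j hi hj hji hjbar
  by_cases hiP : i ∈ P <;> by_cases hjP : j ∈ P
  · exact one_sub_ex_axl_dvd_Dl_sub_Dl hPbar hi hj hiP hjP hji
  · rw [Dl_of_not_mem hjP, sub_zero]
    exact one_sub_ex_axl_dvd_Dl hiP hj hjP hjbar
  · have hibar : i ≠ bar n j := fun h => hjbar (by rw [h, bar_bar hj])
    rw [Dl_of_not_mem hiP, zero_sub, dvd_neg]
    exact (one_sub_ex_axl_dvd_swap n i j).trans (one_sub_ex_axl_dvd_Dl hjP hi hiP hibar)
  · rw [Dl_of_not_mem hiP, Dl_of_not_mem hjP, sub_zero]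
    exact dvd_zero _

/-- For every admissible `P ⊆ V`, the function `Δ_P : V → R` is a K-class. -/
theorem Dl_isKClass (n : ℕ) (hn : 1 ≤ n) (P : Finset ℕ) (hP : admissible n P) :
    isKClass n (Dl n P) :=
  Dl_isKClass_general n P hP
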